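/- arXiv:1009.0220 — 6 statements merged into one kernel-verified Lean document; each statement's English description precedes it below -/
import Mathlib

section
/- Let E be a real vector space and let ψ : E → ℝ be sublinear, i.e. ψ(x + y) ≤ ψ(x) + ψ(y) for all x, y ∈ E and ψ(c • x) = c·ψ(x) for all real c ≥ 0 and all x ∈ E. Let C ⊆ E be a convex cone (closed under addition and under multiplication by nonnegative reals) on which ψ is additive, i.e. ψ(x + y) = ψ(x) + ψ(y) for all x, y ∈ C. Then there exists a linear functional ℓ : E → ℝ such that ℓ(x) ≤ ψ(x) for all x ∈ E and ℓ(x) = ψ(x) for all x ∈ C. -/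
/-- Auxiliary version of the main theorem, assuming `0 ∈ C`. -/
theorem sublinear_exists_linear_le_eqOn_cone_aux
    (E : Type*) [AddCommGroup E] [Module ℝ E]
    (ψ : E → ℝ)
    (hψ_subadd : ∀ x y : E, ψ (x + y) ≤ ψ x + ψ y)
    (hψ_poshom : ∀ (c : ℝ), 0 ≤ c → ∀ x : E, ψ (c • x) = c * ψ x)
    (C : Set E) (h0 : (0:E) ∈ C)
    (hC_add : ∀ x ∈ C, ∀ y ∈ C, x + y ∈ C)
    (hC_smul : ∀ (c : ℝ), 0 ≤ c → ∀ x ∈ C, c • x ∈ C)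
    (hψ_add_on_C : ∀ x ∈ C, ∀ y ∈ C, ψ (x + y) = ψ x + ψ y) :
    ∃ ℓ : E →ₗ[ℝ] ℝ, (∀ x : E, ℓ x ≤ ψ x) ∧ (∀ x ∈ C, ℓ x = ψ x) := by
  classical
  have hψ0 : ψ (0:E) = 0 := by
    have := hψ_poshom 0 le_rfl 0
    simpa using this
  -- well-definedness of the difference map
  have wd : ∀ a ∈ C, ∀ b ∈ C, ∀ a' ∈ C, ∀ b' ∈ C, a - b = a' - b' →
      ψ a - ψ b = ψ a' - ψ b' := by
    intro a ha b hb a' ha' b' hb' h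
    have h2 : a + b' = a' + b := by
      have := sub_eq_sub_iff_add_eq_add.mp h
      linear_combination (norm := abel) this
    have e1 : ψ (a + b') = ψ a + ψ b' := hψ_add_on_C a ha b' hb'
    have e2 : ψ (a' + b) = ψ a' + ψ b := hψ_add_on_C a' ha' b hb
    rw [h2, e2] at e1
    linarith
  -- the subspace C - C
  let p : Submodule ℝ E :=
    { carrier := {x | ∃ a ∈ C, ∃ b ∈ C, x = a - b}
      add_mem' := by
        rintro x y ⟨a, ha, b, hb, rfl⟩ ⟨c, hc, d, hd, rfl⟩
        exact ⟨a + c, hC_add a ha c hc, b + d, hC_add b hb d hd, by abel⟩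
      zero_mem' := ⟨0, h0, 0, h0, by simp⟩
      smul_mem' := by
        rintro c x ⟨a, ha, b, hb, rfl⟩
        rcases le_total 0 c with hc | hc
        · exact ⟨c • a, hC_smul c hc a ha, c • b, hC_smul c hc b hb, by rw [smul_sub]⟩
        · refine ⟨(-c) • b, hC_smul _ (by linarith) b hb,
            (-c) • a, hC_smul _ (by linarith) a ha, ?_⟩
          rw [smul_sub, neg_smul, neg_smul, sub_neg_eq_add, neg_add_eq_sub]
    }
  have hrep : ∀ x : p, ∃ a ∈ C, ∃ b ∈ C, (x : E) = a - b := fun x => x.2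
  choose A hA B hB hAB using hrep
  set g : p → ℝ := fun x => ψ (A x) - ψ (B x) with hg
  have gspec : ∀ (x : p), ∀ a ∈ C, ∀ b ∈ C, (x : E) = a - b → g x = ψ a - ψ b := by
    intro x a ha b hb hx
    exact wd (A x) (hA x) (B x) (hB x) a ha b hb (by rw [← hx, ← hAB x])
  have gadd : ∀ x y : p, g (x + y) = g x + g y := by
    intro x y
    have : ((x + y : p) : E) = (A x + A y) - (B x + B y) := by
      push_cast
      rw [hAB x, hAB y]; abel
    rw [gspec (x + y) _ (hC_add _ (hA x) _ (hA y)) _ (hC_add _ (hB x) _ (hB y)) this,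
      hψ_add_on_C _ (hA x) _ (hA y), hψ_add_on_C _ (hB x) _ (hB y)]
    simp [g]; ring
  have gsmul : ∀ (c : ℝ) (x : p), g (c • x) = c * g x := by
    intro c x
    rcases le_total 0 c with hc | hc
    · have : ((c • x : p) : E) = c • A x - c • B x := by
        push_cast; rw [hAB x, smul_sub]
      rw [gspec (c • x) _ (hC_smul c hc _ (hA x)) _ (hC_smul c hc _ (hB x)) this,
        hψ_poshom c hc, hψ_poshom c hc]
      simp [g]; ring
    · have hc' : (0:ℝ) ≤ -c := by linarith
      have : ((c • x : p) : E) = (-c) • B x - (-c) • A x := by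
        push_cast
        rw [hAB x, smul_sub, neg_smul, neg_smul, sub_neg_eq_add, neg_add_eq_sub]
      rw [gspec (c • x) _ (hC_smul _ hc' _ (hB x)) _ (hC_smul _ hc' _ (hA x)) this,
        hψ_poshom _ hc', hψ_poshom _ hc']
      simp [g]; ring
  let f : E →ₗ.[ℝ] ℝ :=
    ⟨p, { toFun := g, map_add' := gadd, map_smul' := gsmul }⟩
  have hfle : ∀ x : f.domain, f x ≤ ψ x := by
    intro x
    have hx : ψ (A x) ≤ ψ (x : E) + ψ (B x) := by
      have : (A x : E) = (x : E) + B x := by rw [hAB x]; abel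
      rw [this]; exact hψ_subadd _ _
    show g x ≤ ψ (x : E)
    simp only [g]; linarith
  obtain ⟨ℓ, hℓ_eq, hℓ_le⟩ := exists_extension_of_le_sublinear f ψ
    (fun c hc x => hψ_poshom c hc.le x) hψ_subadd hfle
  refine ⟨ℓ, hℓ_le, ?_⟩
  intro x hx
  have hxp : x ∈ p := ⟨x, hx, 0, h0, by simp⟩
  have := hℓ_eq ⟨x, hxp⟩
  rw [this]
  have : f ⟨x, hxp⟩ = ψ x - ψ 0 := gspec ⟨x, hxp⟩ x hx 0 h0 (by simp)
  rw [show f ⟨x, hxp⟩ = ψ x - ψ 0 from this, hψ0, sub_zero]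

/-- Let `E` be a real vector space and `ψ : E → ℝ` sublinear (subadditive and positively
homogeneous).  Let `C ⊆ E` be a convex cone (closed under addition and under multiplication
by nonnegative reals) on which `ψ` is additive.  Then there is a linear functional `ℓ`
with `ℓ x ≤ ψ x` everywhere and `ℓ x = ψ x` on `C`. -/
theorem sublinear_exists_linear_le_eqOn_cone
    (E : Type*) [AddCommGroup E] [Module ℝ E]
    (ψ : E → ℝ)
    (hψ_subadd : ∀ x y : E, ψ (x + y) ≤ ψ x + ψ y)
    (hψ_poshom : ∀ (c : ℝ), 0 ≤ c → ∀ x : E, ψ (c • x) = c * ψ x)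
    (C : Set E)
    (hC_add : ∀ x ∈ C, ∀ y ∈ C, x + y ∈ C)
    (hC_smul : ∀ (c : ℝ), 0 ≤ c → ∀ x ∈ C, c • x ∈ C)
    (hψ_add_on_C : ∀ x ∈ C, ∀ y ∈ C, ψ (x + y) = ψ x + ψ y) :
    ∃ ℓ : E →ₗ[ℝ] ℝ, (∀ x : E, ℓ x ≤ ψ x) ∧ (∀ x ∈ C, ℓ x = ψ x) := by
  classical
  have hψ0 : ψ (0:E) = 0 := by
    have := hψ_poshom 0 le_rfl 0
    simpa using this
  set C' : Set E := insert 0 C with hC'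
  have key := sublinear_exists_linear_le_eqOn_cone_aux E ψ hψ_subadd hψ_poshom C'
    (Set.mem_insert _ _)
    (by
      rintro x (rfl | hx) y (rfl | hy)
      · simp only [add_zero]; exact Set.mem_insert _ _
      · simp only [zero_add]; exact Set.mem_insert_of_mem _ hy
      · simp only [add_zero]; exact Set.mem_insert_of_mem _ hx
      · exact Set.mem_insert_of_mem _ (hC_add x hx y hy))
    (by
      rintro c hc x (rfl | hx)
      · simp only [smul_zero]; exact Set.mem_insert _ _
      · exact Set.mem_insert_of_mem _ (hC_smul c hc x hx))
    (by
      rintro x (rfl | hx) y (rfl | hy) <;> simp [hψ0, hψ_add_on_C, *])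
  obtain ⟨ℓ, h1, h2⟩ := key
  exact ⟨ℓ, h1, fun x hx => h2 x (Set.mem_insert_of_mem _ hx)⟩
end

section
/- Let V be a finite-dimensional real inner product space, ι a finite index set, v : ι → V, a : ι → ℝ, and let 𝒮 be a finite nonempty collection of subsets of ι such that every index i ∈ ι belongs to some member of 𝒮. Then the following are equivalent: (i) for every σ ∈ 𝒮 there exists u ∈ V such that a_i + ⟨u, v_i⟩ ≥ 0 for all i ∈ ι, with equality a_i + ⟨u, v_i⟩ = 0 for all i ∈ σ; (ii) there exists a sublinear function ψ : V → ℝ (that is, ψ(x + y) ≤ ψ(x) + ψ(y) for all x, y and ψ(c • x) = c·ψ(x) for all c ≥ 0) such that ψ(v_i) = a_i for all i ∈ ι and, for each σ ∈ 𝒮, the restriction of ψ to the positive hull pos{v_i : i ∈ σ} agrees with some linear functional on V. -/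
open scoped RealInnerProductSpace

/-!
Given the vectors `u σ`, the pointwise maximum `ψ` of the linear functionals `x ↦ -⟪u σ, x⟫`
is sublinear, and on the cone over `σ` the functional of `σ` is the largest one, since
`-⟪u τ, v i⟫ ≤ a i = -⟪u σ, v i⟫` for `i ∈ σ`.

Conversely, if a linear `ℓ` agrees with a sublinear `ψ` on the cone over `σ`, then `ℓ ≤ ψ` on
the span of that cone: writing `x = y - z` with `y, z` in the cone gives
`ℓ x = ψ y - ψ z ≤ ψ x`. Hahn–Banach extends `ℓ` to a linear functional below `ψ` on all of
`V`, and `-u σ` is its Riesz representative.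
-/

section LinearCombination

variable {R M ι : Type*} [CommSemiring R] [AddCommMonoid M] [Module R M]

variable (R) in
def Finset.linearCombination (σ : Finset ι) (v : ι → M) :
    (ι → R) →ₗ[R] M :=
  ∑ i ∈ σ, (LinearMap.proj i).smulRight (v i)

@[simp]
theorem Finset.linearCombination_apply (σ : Finset ι) (v : ι → M) (c : ι → R) :
    σ.linearCombination R v c = ∑ i ∈ σ, c i • v i := by
  simp [Finset.linearCombination]

theorem Finset.linearCombination_single_one [DecidableEq ι] {σ : Finset ι} (v : ι → M) {i : ι}
    (hi : i ∈ σ) : σ.linearCombination R v (Pi.single i 1) = v i := by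
  simp [Pi.single_apply, hi]

end LinearCombination

section Sublinear

variable {V ι : Type*} [AddCommGroup V] [Module ℝ V] {ψ : V → ℝ}

theorem linearMap_le_of_eq_on_cone (hadd : ∀ x y, ψ (x + y) ≤ ψ x + ψ y) {ℓ : V →ₗ[ℝ] ℝ}
    {σ : Finset ι} {v : ι → V}
    (hℓ : ∀ c : ι → ℝ, (∀ i, 0 ≤ c i) → ψ (∑ i ∈ σ, c i • v i) = ℓ (∑ i ∈ σ, c i • v i))
    (c : ι → ℝ) : ℓ (σ.linearCombination ℝ v c) ≤ ψ (σ.linearCombination ℝ v c) := by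
  set L := σ.linearCombination ℝ v
  have hcone : ∀ d : ι → ℝ, 0 ≤ d → ψ (L d) = ℓ (L d) := fun d hd => by
    simpa [L] using hℓ d hd
  have hsplit : L c⁺ = L c + L c⁻ := by rw [← map_add, eq_add_of_sub_eq (posPart_sub_negPart c)]
  have hψ := hadd (L c) (L c⁻)
  rw [← hsplit, hcone _ (posPart_nonneg c), hcone _ (negPart_nonneg c), hsplit, map_add] at hψ
  linarith

theorem exists_linearMap_le_of_eq_on_cone (hadd : ∀ x y, ψ (x + y) ≤ ψ x + ψ y)
    (hhom : ∀ c : ℝ, 0 < c → ∀ x, ψ (c • x) = c * ψ x) {ℓ : V →ₗ[ℝ] ℝ} {σ : Finset ι}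
    {v : ι → V}
    (hℓ : ∀ c : ι → ℝ, (∀ i, 0 ≤ c i) → ψ (∑ i ∈ σ, c i • v i) = ℓ (∑ i ∈ σ, c i • v i)) :
    ∃ g : V →ₗ[ℝ] ℝ, (∀ x, g x ≤ ψ x) ∧ ∀ i ∈ σ, g (v i) = ψ (v i) := by
  classical
  set L := σ.linearCombination ℝ v
  obtain ⟨g, hgℓ, hgψ⟩ := exists_extension_of_le_sublinear (ℓ.toPMap (LinearMap.range L)) ψ
    hhom hadd (by rintro ⟨_, c, rfl⟩; exact linearMap_le_of_eq_on_cone hadd hℓ c)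
  refine ⟨g, hgψ, fun i hi => ?_⟩
  have hvi : L (Pi.single i 1) = v i := Finset.linearCombination_single_one v hi
  calc g (v i) = ℓ (v i) := hvi ▸ hgℓ ⟨L (Pi.single i 1), Pi.single i 1, rfl⟩
    _ = ψ (v i) := by
      rw [← hvi]
      simpa [L] using (hℓ _ fun j => (Pi.single_nonneg.2 zero_le_one : (0 : ι → ℝ) ≤ _) j).symm

end Sublinear

section SupLinear

variable {V κ : Type*} [AddCommGroup V] [Module ℝ V] {s : Finset κ} (hs : s.Nonempty)
  (ℓ : κ → V →ₗ[ℝ] ℝ)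

theorem Finset.sup'_linearMap_add_le (x y : V) :
    s.sup' hs (fun k => ℓ k (x + y)) ≤ s.sup' hs (fun k => ℓ k x) + s.sup' hs (fun k => ℓ k y) :=
  Finset.sup'_le _ _ fun k hk => by
    rw [map_add]
    exact add_le_add (Finset.le_sup' (fun k => ℓ k x) hk) (Finset.le_sup' (fun k => ℓ k y) hk)

theorem Finset.sup'_linearMap_smul {c : ℝ} (hc : 0 ≤ c) (x : V) :
    s.sup' hs (fun k => ℓ k (c • x)) = c * s.sup' hs (fun k => ℓ k x) := by
  simp_rw [Finset.mul₀_sup' hc, map_smul, smul_eq_mul]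

end SupLinear

section Fan

variable {V ι : Type*} [AddCommGroup V] [Module ℝ V] {𝒮 : Finset (Finset ι)} (h𝒮 : 𝒮.Nonempty)
  {ℓ : Finset ι → V →ₗ[ℝ] ℝ} {v : ι → V} {a : ι → ℝ}
  (hle : ∀ τ ∈ 𝒮, ∀ i, ℓ τ (v i) ≤ a i) (heq : ∀ τ ∈ 𝒮, ∀ i ∈ τ, ℓ τ (v i) = a i)
include hle heq

theorem sup'_linearMap_sum_smul_eq {σ : Finset ι} (hσ : σ ∈ 𝒮) {c : ι → ℝ} (hc : ∀ i, 0 ≤ c i) :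
    𝒮.sup' h𝒮 (fun τ => ℓ τ (∑ i ∈ σ, c i • v i)) = ℓ σ (∑ i ∈ σ, c i • v i) := by
  refine le_antisymm (Finset.sup'_le _ _ fun τ hτ => ?_) (Finset.le_sup' (fun τ => ℓ τ _) hσ)
  simp only [map_sum, map_smul, smul_eq_mul]
  exact Finset.sum_le_sum fun i hi => by
    rw [heq σ hσ i hi]
    exact mul_le_mul_of_nonneg_left (hle τ hτ i) (hc i)

theorem sup'_linearMap_apply_eq {i : ι} (hcover : ∃ σ ∈ 𝒮, i ∈ σ) :
    𝒮.sup' h𝒮 (fun τ => ℓ τ (v i)) = a i := by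
  obtain ⟨σ, hσ, hi⟩ := hcover
  refine le_antisymm (Finset.sup'_le _ _ fun τ hτ => hle τ hτ i) ?_
  exact heq σ hσ i hi ▸ Finset.le_sup' (fun τ => ℓ τ (v i)) hσ

end Fan

theorem exists_inner_nonneg_iff_exists_linearMap_le {V ι : Type*} [NormedAddCommGroup V]
    [InnerProductSpace ℝ V] [FiniteDimensional ℝ V] (v : ι → V) (a : ι → ℝ) (σ : Finset ι) :
    (∃ u : V, (∀ i, 0 ≤ a i + ⟪u, v i⟫) ∧ ∀ i ∈ σ, a i + ⟪u, v i⟫ = 0) ↔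
      ∃ ℓ : V →ₗ[ℝ] ℝ, (∀ i, ℓ (v i) ≤ a i) ∧ ∀ i ∈ σ, ℓ (v i) = a i := by
  constructor
  · rintro ⟨u, hnonneg, hzero⟩
    refine ⟨-innerₛₗ ℝ u, fun i => ?_, fun i hi => ?_⟩
    · simp only [LinearMap.neg_apply, coe_innerₛₗ_apply]
      linarith [hnonneg i]
    · simp only [LinearMap.neg_apply, coe_innerₛₗ_apply]
      linarith [hzero i hi]
  · rintro ⟨ℓ, hle, heq⟩
    set w := (InnerProductSpace.toDual ℝ V).symm (LinearMap.toContinuousLinearMap ℓ)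
    have hw : ∀ x, ⟪w, x⟫ = ℓ x := fun x => by
      rw [InnerProductSpace.toDual_symm_apply, LinearMap.coe_toContinuousLinearMap']
    refine ⟨-w, fun i => ?_, fun i hi => ?_⟩
    · simpa [inner_neg_left, hw] using hle i
    · simp [inner_neg_left, hw, heq i hi]

theorem exists_u_iff_exists_sublinear_general
    (V : Type*) [NormedAddCommGroup V] [InnerProductSpace ℝ V] [FiniteDimensional ℝ V]
    (ι : Type*) (v : ι → V) (a : ι → ℝ)
    (𝒮 : Finset (Finset ι)) (h𝒮 : 𝒮.Nonempty)
    (hcover : ∀ i : ι, ∃ σ ∈ 𝒮, i ∈ σ) :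
    (∀ σ ∈ 𝒮, ∃ u : V,
        (∀ i : ι, 0 ≤ a i + ⟪u, v i⟫) ∧ (∀ i ∈ σ, a i + ⟪u, v i⟫ = 0))
    ↔
    (∃ ψ : V → ℝ,
        (∀ x y : V, ψ (x + y) ≤ ψ x + ψ y) ∧
        (∀ (c : ℝ), 0 ≤ c → ∀ x : V, ψ (c • x) = c * ψ x) ∧
        (∀ i : ι, ψ (v i) = a i) ∧
        (∀ σ ∈ 𝒮, ∃ ℓ : V →ₗ[ℝ] ℝ,
          ∀ c : ι → ℝ, (∀ i, 0 ≤ c i) →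
            ψ (∑ i ∈ σ, c i • v i) = ℓ (∑ i ∈ σ, c i • v i))) := by
  simp_rw [exists_inner_nonneg_iff_exists_linearMap_le]
  constructor
  · intro h
    choose! ℓ hle heq using h
    exact ⟨fun x => 𝒮.sup' h𝒮 fun σ => ℓ σ x, Finset.sup'_linearMap_add_le h𝒮 ℓ,
      fun c hc => Finset.sup'_linearMap_smul h𝒮 ℓ hc,
      fun i => sup'_linearMap_apply_eq h𝒮 hle heq (hcover i),
      fun σ hσ => ⟨ℓ σ, fun c hc => sup'_linearMap_sum_smul_eq h𝒮 hle heq hσ hc⟩⟩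
  · rintro ⟨ψ, hadd, hhom, hval, hcone⟩ σ hσ
    obtain ⟨ℓ, hℓ⟩ := hcone σ hσ
    obtain ⟨g, hgψ, hgv⟩ := exists_linearMap_le_of_eq_on_cone hadd (fun c hc => hhom c hc.le) hℓ
    exact ⟨g, fun i => hval i ▸ hgψ (v i), fun i hi => (hgv i hi).trans (hval i)⟩

/-- Fan-free form of the equivalence (2) ⇔ (3) of Proposition 2.3:
for a finite family `v : ι → V`, coefficients `a : ι → ℝ`, and a nonempty finite
collection `𝒮` of subsets of `ι` covering `ι`, the existence for each `σ ∈ 𝒮` of a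
vector `u` with `a i + ⟪u, v i⟫ ≥ 0` for all `i`, with equality for `i ∈ σ`, is
equivalent to the existence of a sublinear function `ψ` with `ψ (v i) = a i` for all
`i` that agrees with a linear functional on the positive hull of `{v i : i ∈ σ}` for
each `σ ∈ 𝒮`. -/
theorem exists_u_iff_exists_sublinear
    (V : Type*) [NormedAddCommGroup V] [InnerProductSpace ℝ V] [FiniteDimensional ℝ V]
    (ι : Type*) [Fintype ι] (v : ι → V) (a : ι → ℝ)
    (𝒮 : Finset (Finset ι)) (h𝒮 : 𝒮.Nonempty)
    (hcover : ∀ i : ι, ∃ σ ∈ 𝒮, i ∈ σ) :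
    (∀ σ ∈ 𝒮, ∃ u : V,
        (∀ i : ι, 0 ≤ a i + ⟪u, v i⟫) ∧ (∀ i ∈ σ, a i + ⟪u, v i⟫ = 0))
    ↔
    (∃ ψ : V → ℝ,
        (∀ x y : V, ψ (x + y) ≤ ψ x + ψ y) ∧
        (∀ (c : ℝ), 0 ≤ c → ∀ x : V, ψ (c • x) = c * ψ x) ∧
        (∀ i : ι, ψ (v i) = a i) ∧
        (∀ σ ∈ 𝒮, ∃ ℓ : V →ₗ[ℝ] ℝ,
          ∀ c : ι → ℝ, (∀ i, 0 ≤ c i) →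
            ψ (∑ i ∈ σ, c i • v i) = ℓ (∑ i ∈ σ, c i • v i))) :=
  exists_u_iff_exists_sublinear_general V ι v a 𝒮 h𝒮 hcover
end

section
/- Let s ≥ 2, r ≥ 1, and k ≥ 1 be integers, and let 0 = a_0 ≤ a_1 ≤ ⋯ ≤ a_r be real numbers. In ℝ², form the intersection of the cones pos({(1,0)} ∪ {(−a_j, 1) : j ∈ J}) over all pairs (I, J) of nonempty subsets I ⊆ {0,…,s−1} and J ⊆ {0,…,r} with |I| + |J| ≥ r + s + 1 − k. This intersection equals pos({(1,0), (−a_m, 1)}), where m = r − k if k < r and m = 0 if k ≥ r. -/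
/-- The positive hull of a subset `S` of a real vector space: all finite nonnegative
linear combinations of elements of `S`. -/
def posHull {E : Type*} [AddCommGroup E] [Module ℝ E] (S : Set E) : Set E :=
  {x | ∃ (t : Finset E) (c : E → ℝ),
    ↑t ⊆ S ∧ (∀ y ∈ t, 0 ≤ c y) ∧ x = ∑ y ∈ t, c y • y}

lemma pair_mem_posHull {S : Set (ℝ × ℝ)} {u v : ℝ × ℝ} (hu : u ∈ S) (hv : v ∈ S)
    (huv : u ≠ v) {b c : ℝ} (hb : 0 ≤ b) (hc : 0 ≤ c) : b • u + c • v ∈ posHull S := by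
  refine ⟨{u, v}, fun w => if w = u then b else c, ?_, ?_, ?_⟩
  · intro w hw
    simp only [Finset.coe_insert, Finset.coe_singleton, Set.mem_insert_iff,
      Set.mem_singleton_iff] at hw
    rcases hw with h | h <;> subst h <;> assumption
  · intro w _
    by_cases h : w = u <;> simp [h, hb, hc]
  · rw [Finset.sum_pair huv]
    simp [Ne.symm huv]

lemma posHull_subset_halfplane {c : ℝ} {S : Set (ℝ × ℝ)}
    (h : ∀ z ∈ S, 0 ≤ z.2 ∧ 0 ≤ z.1 + c * z.2) {p : ℝ × ℝ} (hp : p ∈ posHull S) :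
    0 ≤ p.2 ∧ 0 ≤ p.1 + c * p.2 := by
  obtain ⟨t, d, hts, hd, rfl⟩ := hp
  constructor
  · rw [Prod.snd_sum]
    apply Finset.sum_nonneg
    intro y hy
    have h1 := (h y (hts hy)).1
    have h2 := hd y hy
    simp only [Prod.smul_snd, smul_eq_mul]
    exact mul_nonneg h2 h1
  · rw [Prod.fst_sum, Prod.snd_sum, Finset.mul_sum, ← Finset.sum_add_distrib]
    apply Finset.sum_nonneg
    intro y hy
    have h1 := (h y (hts hy)).2
    have h2 := hd y hy
    simp only [Prod.smul_fst, Prod.smul_snd, smul_eq_mul]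
    nlinarith [mul_nonneg h2 h1]

lemma aux_G_Delta (s r k : ℕ) (hs : 1 ≤ s) (a : Fin (r + 1) → ℝ) {c : ℝ}
    (J0 : Finset (Fin (r + 1))) (hJ0ne : J0.Nonempty) (hJ0card : r + 1 ≤ J0.card + k)
    (hJ0le : ∀ j ∈ J0, a j ≤ c)
    (hbwd : ∀ J : Finset (Fin (r + 1)), J.Nonempty → r + 1 ≤ J.card + k →
      ∃ j ∈ J, c ≤ a j) :
    (⋂ (I : Finset (Fin s)) (J : Finset (Fin (r + 1)))
        (_ : I.Nonempty) (_ : J.Nonempty)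
        (_ : r + s + 1 ≤ I.card + J.card + k),
      posHull ({((1 : ℝ), (0 : ℝ))} ∪
        (fun j : Fin (r + 1) => ((-a j, (1 : ℝ)) : ℝ × ℝ)) '' (J : Set (Fin (r + 1)))))
    = posHull {((1 : ℝ), (0 : ℝ)), ((-c, (1 : ℝ)) : ℝ × ℝ)} := by
  ext p
  obtain ⟨x, y⟩ := p
  simp only [Set.mem_iInter]
  constructor
  · intro h
    have hIne : (Finset.univ : Finset (Fin s)).Nonempty :=
      ⟨⟨0, by omega⟩, Finset.mem_univ _⟩
    have hmem := h Finset.univ J0 hIne hJ0ne (by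
      have hcu : (Finset.univ : Finset (Fin s)).card = s := by simp
      omega)
    have hhp := posHull_subset_halfplane (c := c) ?_ hmem
    · have heq : ((x, y) : ℝ × ℝ)
          = (x + c * y) • ((1 : ℝ), (0 : ℝ)) + y • ((-c, (1 : ℝ)) : ℝ × ℝ) := by
        simp only [Prod.smul_mk, smul_eq_mul, Prod.mk_add_mk, Prod.mk.injEq]
        constructor <;> ring
      rw [heq]
      exact pair_mem_posHull (u := ((1 : ℝ), (0 : ℝ))) (v := ((-c, (1 : ℝ)) : ℝ × ℝ))
        (S := {((1 : ℝ), (0 : ℝ)), ((-c, (1 : ℝ)) : ℝ × ℝ)})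
        (Set.mem_insert _ _) (Set.mem_insert_of_mem _ (Set.mem_singleton _))
        (by simp) hhp.2 hhp.1
    · rintro z (rfl | ⟨j, hj, rfl⟩)
      · norm_num
      · have := hJ0le j hj
        constructor
        · norm_num
        · simp only
          linarith
  · intro hp I J hIne hJne hcard
    have hIcard : I.card ≤ s := by
      have := Finset.card_le_univ I
      simpa using this
    obtain ⟨j0, hj0J, hj0⟩ := hbwd J hJne (by omega)
    have hhp := posHull_subset_halfplane (c := c) ?_ hp
    · have heq : ((x, y) : ℝ × ℝ)
          = (x + a j0 * y) • ((1 : ℝ), (0 : ℝ)) + y • ((-a j0, (1 : ℝ)) : ℝ × ℝ) := by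
        simp only [Prod.smul_mk, smul_eq_mul, Prod.mk_add_mk, Prod.mk.injEq]
        constructor <;> ring
      rw [heq]
      refine pair_mem_posHull (u := ((1 : ℝ), (0 : ℝ)))
        (v := ((-a j0, (1 : ℝ)) : ℝ × ℝ))
        (S := {((1 : ℝ), (0 : ℝ))} ∪
          (fun j : Fin (r + 1) => ((-a j, (1 : ℝ)) : ℝ × ℝ)) '' (J : Set (Fin (r + 1))))
        (Set.mem_union_left _ (Set.mem_singleton _))
        (Set.mem_union_right _ ⟨j0, Finset.mem_coe.mpr hj0J, rfl⟩) (by simp) ?_ hhp.1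
      nlinarith [hhp.1, hhp.2, mul_nonneg (sub_nonneg.mpr hj0) hhp.1]
    · rintro z (rfl | rfl)
      · norm_num
      · constructor
        · norm_num
        · simp only
          linarith

/-- The computation of the cone `𝒢_{Δ_k}` in Proposition 5.2: the intersection, over all
pairs `(I, J)` of nonempty subsets `I ⊆ {0,…,s−1}`, `J ⊆ {0,…,r}` with
`|I| + |J| ≥ r + s + 1 − k`, of the cones `pos({(1,0)} ∪ {(−a_j, 1) : j ∈ J})` equals
`pos({(1,0), (−a_m, 1)})` where `m = r − k` if `k < r`, and `m = 0` if `k ≥ r`. -/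
theorem G_Delta_k_eq
    (s r k : ℕ) (hs : 2 ≤ s) (hr : 1 ≤ r) (hk : 1 ≤ k)
    (a : Fin (r + 1) → ℝ) (ha0 : a 0 = 0) (hmono : Monotone a) :
    (⋂ (I : Finset (Fin s)) (J : Finset (Fin (r + 1)))
        (_ : I.Nonempty) (_ : J.Nonempty)
        (_ : r + s + 1 ≤ I.card + J.card + k),
      posHull ({((1 : ℝ), (0 : ℝ))} ∪
        (fun j : Fin (r + 1) => ((-a j, (1 : ℝ)) : ℝ × ℝ)) '' (J : Set (Fin (r + 1)))))
    = posHull {((1 : ℝ), (0 : ℝ)),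
        ((-a (if _ : k < r then ⟨r - k, by omega⟩ else 0), (1 : ℝ)) : ℝ × ℝ)} := by
  set mIdx : Fin (r + 1) := if _ : k < r then ⟨r - k, by omega⟩ else 0 with hmIdx
  have hmIdxval : (mIdx : ℕ) = r - k := by
    rw [hmIdx]
    split_ifs with h
    · rfl
    · simp only [Fin.val_zero]
      omega
  -- the witness set J0 = {0, 1, ..., r-k}
  set f : Fin (r + 1 - k) → Fin (r + 1) := fun i => ⟨i.val, by omega⟩ with hf
  have hfinj : Function.Injective f := by
    intro i j hij
    rw [hf] at hij
    simp only [Fin.mk.injEq] at hij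
    exact Fin.ext hij
  set J0 : Finset (Fin (r + 1)) := insert 0 (Finset.image f Finset.univ) with hJ0
  have hJ0card' : (Finset.image f Finset.univ).card = r + 1 - k := by
    rw [Finset.card_image_of_injective _ hfinj, Finset.card_univ, Fintype.card_fin]
  refine aux_G_Delta s r k (by omega) a J0 ⟨0, Finset.mem_insert_self _ _⟩ ?_ ?_ ?_
  · have h1 : (Finset.image f Finset.univ).card ≤ J0.card :=
      Finset.card_le_card (Finset.subset_insert _ _)
    have h2 : 1 ≤ J0.card := Finset.card_pos.mpr ⟨0, Finset.mem_insert_self _ _⟩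
    omega
  · intro j hj
    rw [hJ0] at hj
    have hjval : (j : ℕ) ≤ r - k := by
      rcases Finset.mem_insert.mp hj with h | h
      · subst h; simp
      · obtain ⟨i, _, hfi⟩ := Finset.mem_image.mp h
        have hval : (j : ℕ) = (i : ℕ) := by rw [← hfi]
        have hlt : (i : ℕ) < r + 1 - k := i.isLt
        omega
    exact hmono (by rw [Fin.le_def]; omega)
  · intro J hJne hJcard
    by_cases hkr : k < r
    · -- claim: some element of J has value ≥ r - k
      by_contra hcon
      push_neg at hcon
      have hsmall : ∀ j ∈ J, (j : ℕ) < r - k := by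
        intro j hj
        by_contra hge
        push_neg at hge
        have hle : a mIdx ≤ a j := hmono (by rw [Fin.le_def]; omega)
        exact absurd hle (not_le.mpr (hcon j hj))
      have hcard : J.card ≤ r - k := by
        have := Finset.card_le_card_of_injOn (f := fun j : Fin (r + 1) => (j : ℕ))
          (t := Finset.range (r - k))
          (fun j hj => Finset.mem_range.mpr (hsmall j hj))
          (fun i _ j _ hij => Fin.ext hij)
        simpa using this
      omega
    · obtain ⟨j, hj⟩ := hJne
      refine ⟨j, hj, ?_⟩
      exact hmono (by rw [Fin.le_def]; omega)
end

section
/- Let s ≥ 2, r ≥ 1, and 1 ≤ k ≤ r + s − 1 be integers, and let 0 = a_0 ≤ a_1 ≤ ⋯ ≤ a_r be real numbers. For each pair (I, J) of nonempty subsets I ⊆ {0,…,s−1}, J ⊆ {0,…,r} with |I| + |J| ≥ r + s + 2 − k, define a cone L_{I,J} ⊆ ℝ² as follows: L_{I,J} = pos({(1,0)} ∪ {(−a_j, 1) : j ∈ J}) if |I| ≥ 2 and |J| ≥ 2; L_{I,J} = pos({(1,0), (−1,0)} ∪ {(−a_j, 1) : j ∈ J}) if |I| = 1 and |J| ≥ 2;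 and L_{I,J} = pos({(1,0), (−a_{j₀}, 1), (a_{j₀}, −1)}) if |J| = 1 with J = {j₀} and |I| ≥ 2 (the case |I| = |J| = 1 does not occur, since |I| + |J| ≥ r + s + 2 − k ≥ 3). Then the intersection of the cones L_{I,J} over all such pairs equals pos({(1,0), (−a_m, 1)}), where m = r − k + 1 if k ≤ r and m = 0 if k > r. -/
/-- The cone `L_{I,J}` of the second assertion of Proposition 5.2.  When `|I| ≥ 2` and
`|J| ≥ 2` it is `pos({(1,0)} ∪ {(−a_j,1) : j ∈ J})`; when `|I| = 1` (and `|J| ≥ 2`) it is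
`pos({(1,0), (−1,0)} ∪ {(−a_j,1) : j ∈ J})`; when `|J| = 1` with `J = {j₀}` (and `|I| ≥ 2`)
it is `pos({(1,0), (−a_{j₀},1), (a_{j₀},−1)})`, which for a singleton `J` coincides with
`pos({(1,0)} ∪ {(−a_j,1) : j ∈ J} ∪ {(a_j,−1) : j ∈ J})`. -/
def Lcone (r : ℕ) (a : Fin (r + 1) → ℝ) {s : ℕ}
    (I : Finset (Fin s)) (J : Finset (Fin (r + 1))) : Set (ℝ × ℝ) :=
  if 2 ≤ I.card ∧ 2 ≤ J.card then
    posHull ({((1 : ℝ), (0 : ℝ))} ∪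
      (fun j : Fin (r + 1) => ((-a j, (1 : ℝ)) : ℝ × ℝ)) '' (J : Set (Fin (r + 1))))
  else if I.card = 1 then
    posHull ({((1 : ℝ), (0 : ℝ)), ((-1 : ℝ), (0 : ℝ))} ∪
      (fun j : Fin (r + 1) => ((-a j, (1 : ℝ)) : ℝ × ℝ)) '' (J : Set (Fin (r + 1))))
  else
    posHull ({((1 : ℝ), (0 : ℝ))} ∪
      (fun j : Fin (r + 1) => ((-a j, (1 : ℝ)) : ℝ × ℝ)) '' (J : Set (Fin (r + 1))) ∪
      (fun j : Fin (r + 1) => ((a j, (-1 : ℝ)) : ℝ × ℝ)) '' (J : Set (Fin (r + 1))))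

section posHull

variable {E : Type*} [AddCommGroup E] [Module ℝ E] {S T : Set E}

theorem posHull_eq_hull (S : Set E) : posHull S = (PointedCone.hull ℝ S : Set E) := by
  ext x
  rw [SetLike.mem_coe]
  constructor
  · rintro ⟨t, c, ht, hc, rfl⟩
    exact Submodule.sum_mem _ fun y hy => by
      exact Submodule.smul_mem _ ⟨c y, hc y hy⟩ (PointedCone.subset_hull (ht hy))
  · intro hx
    obtain ⟨c, hc, hc₀, rfl⟩ := PointedCone.mem_hull_set.1 hx
    exact ⟨c.support, c, hc, fun y _ => hc₀ y, rfl⟩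

theorem subset_posHull : S ⊆ posHull S := by
  rw [posHull_eq_hull]
  exact PointedCone.subset_hull

theorem posHull_subset_posHull (h : S ⊆ posHull T) : posHull S ⊆ posHull T := by
  rw [posHull_eq_hull] at h ⊢
  rw [posHull_eq_hull]
  exact SetLike.coe_subset_coe.2 (Submodule.span_le.2 h)

theorem posHull_mono (h : S ⊆ T) : posHull S ⊆ posHull T :=
  posHull_subset_posHull (h.trans subset_posHull)

theorem smul_add_smul_mem_posHull {x y : E} (hx : x ∈ S) (hy : y ∈ S) {b c : ℝ}
    (hb : 0 ≤ b) (hc : 0 ≤ c) : b • x + c • y ∈ posHull S := by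
  rw [posHull_eq_hull]
  exact add_mem (Submodule.smul_mem _ ⟨b, hb⟩ (PointedCone.subset_hull hx))
    (Submodule.smul_mem _ ⟨c, hc⟩ (PointedCone.subset_hull hy))

theorem nonneg_of_mem_posHull (f : E →ₗ[ℝ] ℝ) (hf : ∀ y ∈ S, 0 ≤ f y) {x : E}
    (hx : x ∈ posHull S) : 0 ≤ f x := by
  rw [posHull_eq_hull] at hx
  have : PointedCone.hull ℝ S ≤ (PointedCone.positive ℝ ℝ).comap f :=
    Submodule.span_le.2 fun y hy => (PointedCone.mem_positive ℝ ℝ).2 (hf y hy)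
  exact (PointedCone.mem_positive ℝ ℝ).1 (this hx)

end posHull

theorem mem_posHull_pair_of_le {b c : ℝ} (h : b ≤ c) :
    ((-b, 1) : ℝ × ℝ) ∈ posHull {((1 : ℝ), (0 : ℝ)), ((-c, 1) : ℝ × ℝ)} := by
  have := smul_add_smul_mem_posHull (Set.mem_insert ((1 : ℝ), (0 : ℝ)) {((-c, 1) : ℝ × ℝ)})
    (Set.mem_insert_of_mem _ rfl) (sub_nonneg.2 h) zero_le_one
  convert this using 1
  ext <;> simp
  ring

theorem mem_posHull_of_nonneg {x : ℝ × ℝ} (h₁ : 0 ≤ x.1) (h₂ : 0 ≤ x.2) :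
    x ∈ posHull {((1 : ℝ), (0 : ℝ)), ((0 : ℝ), (1 : ℝ))} := by
  have := smul_add_smul_mem_posHull (Set.mem_insert ((1 : ℝ), (0 : ℝ)) {((0 : ℝ), (1 : ℝ))})
    (Set.mem_insert_of_mem _ rfl) h₁ h₂
  convert this using 1
  simp

theorem Fin.exists_mem_le_of_lt_card {n m : ℕ} {J : Finset (Fin n)} (h : m < J.card) :
    ∃ j ∈ J, m ≤ (j : ℕ) := by
  by_contra! hJ
  have : (J.map Fin.valEmbedding) ⊆ Finset.range m := fun v hv => by
    obtain ⟨j, hj, rfl⟩ := Finset.mem_map.1 hv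
    exact Finset.mem_range.2 (hJ j hj)
  have := Finset.card_le_card this
  simp only [Finset.card_map, Finset.card_range] at this
  omega

section Lcone

variable {r s : ℕ} {a : Fin (r + 1) → ℝ} {I : Finset (Fin s)} {J : Finset (Fin (r + 1))}

theorem posHull_insert_image_subset_Lcone :
    posHull (insert ((1 : ℝ), (0 : ℝ)) ((fun j => ((-a j, (1 : ℝ)) : ℝ × ℝ)) '' J)) ⊆
      Lcone r a I J := by
  unfold Lcone
  split_ifs <;> refine posHull_mono ?_ <;> rintro x (rfl | hx) <;> simp_all

theorem posHull_pair_subset_Lcone {M j : Fin (r + 1)} (hj : j ∈ J) (h : a M ≤ a j) :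
    posHull {((1 : ℝ), (0 : ℝ)), ((-a M, 1) : ℝ × ℝ)} ⊆ Lcone r a I J := by
  refine (posHull_subset_posHull fun x hx => ?_).trans posHull_insert_image_subset_Lcone
  have hsub : {((1 : ℝ), (0 : ℝ)), ((-a j, 1) : ℝ × ℝ)} ⊆
      insert ((1 : ℝ), (0 : ℝ)) ((fun j => ((-a j, (1 : ℝ)) : ℝ × ℝ)) '' J) :=
    Set.insert_subset_insert (Set.singleton_subset_iff.2 ⟨j, hj, rfl⟩)
  rcases hx with rfl | rfl
  · exact subset_posHull (Set.mem_insert _ _)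
  · exact posHull_mono hsub (mem_posHull_pair_of_le h)

theorem Lcone_subset_posHull_pair (hI : 2 ≤ I.card) (hJ : 2 ≤ J.card) {M : Fin (r + 1)}
    (hM : ∀ j ∈ J, a j ≤ a M) :
    Lcone r a I J ⊆ posHull {((1 : ℝ), (0 : ℝ)), ((-a M, 1) : ℝ × ℝ)} := by
  rw [Lcone, if_pos ⟨hI, hJ⟩]
  refine posHull_subset_posHull ?_
  rintro x (rfl | ⟨j, hj, rfl⟩)
  · exact subset_posHull (Set.mem_insert _ _)
  · exact mem_posHull_pair_of_le (hM j hj)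

theorem snd_nonneg_of_mem_Lcone (hI : 2 ≤ I.card) (hJ : 2 ≤ J.card) {x : ℝ × ℝ}
    (hx : x ∈ Lcone r a I J) : 0 ≤ x.2 := by
  rw [Lcone, if_pos ⟨hI, hJ⟩] at hx
  refine nonneg_of_mem_posHull (LinearMap.snd ℝ ℝ ℝ) ?_ hx
  rintro y (rfl | ⟨j, -, rfl⟩) <;> simp

theorem fst_nonneg_of_mem_Lcone_singleton (hI : 2 ≤ I.card) {j : Fin (r + 1)} (ha : a j = 0)
    {x : ℝ × ℝ} (hx : x ∈ Lcone r a I {j}) : 0 ≤ x.1 := by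
  rw [Lcone, if_neg (by simp), if_neg (by omega)] at hx
  simp only [Finset.coe_singleton, Set.image_singleton] at hx
  refine nonneg_of_mem_posHull (LinearMap.fst ℝ ℝ ℝ) ?_ hx
  rintro y ((rfl | rfl) | rfl) <;> simp [ha]

end Lcone

/-- The computation of the cone `𝓛_{Δ_k}` in Proposition 5.2: the intersection of the
cones `L_{I,J}` over all pairs `(I, J)` of nonempty subsets `I ⊆ {0,…,s−1}`,
`J ⊆ {0,…,r}` with `|I| + |J| ≥ r + s + 2 − k` equals `pos({(1,0), (−a_m, 1)})`, where
`m = r − k + 1` if `k ≤ r` and `m = 0` if `k > r`. -/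
theorem L_Delta_k_eq
    (s r k : ℕ) (hs : 2 ≤ s) (hr : 1 ≤ r) (hk : 1 ≤ k) (hk' : k ≤ r + s - 1)
    (a : Fin (r + 1) → ℝ) (ha0 : a 0 = 0) (hmono : Monotone a) :
    (⋂ (I : Finset (Fin s)) (J : Finset (Fin (r + 1)))
        (_ : I.Nonempty) (_ : J.Nonempty)
        (_ : r + s + 2 ≤ I.card + J.card + k),
      Lcone r a I J)
    = posHull {((1 : ℝ), (0 : ℝ)),
        ((-a (if _ : k ≤ r then ⟨r - k + 1, by omega⟩ else 0), (1 : ℝ)) : ℝ × ℝ)} := by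
  set M : Fin (r + 1) := if _ : k ≤ r then ⟨r - k + 1, by omega⟩ else 0 with hM
  have hs' : 2 ≤ (Finset.univ : Finset (Fin s)).card := by simpa
  have hI₀ : (Finset.univ : Finset (Fin s)).Nonempty := Finset.card_pos.1 (by omega)
  refine Set.Subset.antisymm (fun x hx => ?_) (fun x hx => ?_)
  · simp only [Set.mem_iInter] at hx
    by_cases hkr : k ≤ r
    · have hMk : (M : ℕ) = r - k + 1 := by simp [hM, hkr]
      have hIic : (Finset.Iic M).card = r - k + 2 := by simp [hMk]
      exact Lcone_subset_posHull_pair hs' (by omega) (fun j hj => hmono (Finset.mem_Iic.1 hj))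
        (hx _ _ hI₀ Finset.nonempty_Iic (by simp [hIic]; omega))
    · obtain ⟨I, -, hI⟩ := Finset.exists_subset_card_eq
        (s := (Finset.univ : Finset (Fin s))) (n := r + s + 1 - k) (by simp; omega)
      have hx₁ := snd_nonneg_of_mem_Lcone hs' (by simp; omega)
        (hx _ _ hI₀ Finset.univ_nonempty (by simp; omega))
      have hx₂ := fst_nonneg_of_mem_Lcone_singleton (by omega) ha0
        (hx I {0} (Finset.card_pos.1 (by omega)) (Finset.singleton_nonempty _) (by simp; omega))
      simpa [hM, hkr, ha0] using mem_posHull_of_nonneg hx₂ hx₁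
  · simp only [Set.mem_iInter]
    intro I J _ hJ hcard
    have hMJ : (M : ℕ) < J.card := by
      have := hJ.card_pos
      have := (Finset.card_le_univ I).trans_eq (Fintype.card_fin s)
      by_cases hkr : k ≤ r <;> simp [hM, hkr] <;> omega
    obtain ⟨j, hj, hMj⟩ := Fin.exists_mem_le_of_lt_card hMJ
    exact posHull_pair_subset_Lcone hj (hmono hMj) hx
end

section
/- Let n ≥ 4 be an integer and let 𝓘 = {I ⊆ {1,…,n} : 1 ∈ I and 2 ≤ |I| ≤ n − 2}. Call two elements I, J ∈ 𝓘 compatible if I ⊆ J, or J ⊆ I, or I ∪ J = {1,…,n}. Then every subset σ ⊆ 𝓘 whose elements are pairwise compatible has cardinality at most n − 3. -/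
/-! Taking complements in `{1,…,n}` turns a pairwise-compatible family into a laminar family
(any two members nested or disjoint) of sets of size at least 2 inside `{2,…,n}`, none of them
equal to `{2,…,n}`. A laminar family of sets of size at least 2 on a ground set `S` has at most
`|S| - 1` members: deleting one point `y` of a minimal member `A` discards `A`, keeps the family
laminar with members of size at least 2, and loses no other member, because every other member
contains either both or neither of `y` and a second point `x` of `A`. Adjoining `S` itself
improves the bound to `|S| - 2 = n - 3` for families avoiding `S`. -/

open Finset

variable {α : Type*}

def IsLaminar (F : Finset (Finset α)) : Prop :=
  ∀ A ∈ F, ∀ B ∈ F, A ⊆ B ∨ B ⊆ A ∨ Disjoint A B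

theorem Finset.eq_of_erase_eq [DecidableEq α] {x y : α} (hxy : x ≠ y) {B C : Finset α}
    (hB : x ∈ B ↔ y ∈ B) (hC : x ∈ C ↔ y ∈ C) (h : B.erase y = C.erase y) : B = C := by
  ext z
  by_cases hz : z = y
  · subst hz
    rw [← hB, ← hC]
    simpa only [mem_erase, ne_eq, hxy, not_false_eq_true, true_and] using Finset.ext_iff.1 h x
  · simpa only [mem_erase, ne_eq, hz, not_false_eq_true, true_and] using Finset.ext_iff.1 h z

namespace IsLaminar

variable {F G : Finset (Finset α)}

theorem mono (hF : IsLaminar F) (hGF : G ⊆ F) : IsLaminar G :=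
  fun A hA B hB => hF A (hGF hA) B (hGF hB)

theorem image_erase [DecidableEq α] (hF : IsLaminar F) (y : α) :
    IsLaminar (F.image (·.erase y)) := by
  simp only [IsLaminar, forall_mem_image]
  intro A hA B hB
  rcases hF A hA B hB with h | h | h
  · exact .inl (erase_subset_erase y h)
  · exact .inr (.inl (erase_subset_erase y h))
  · exact .inr (.inr (h.mono (erase_subset y A) (erase_subset y B)))

theorem insert_of_forall_subset [DecidableEq α] (hF : IsLaminar F) {S : Finset α}
    (hS : ∀ A ∈ F, A ⊆ S) : IsLaminar (insert S F) := by
  simp only [IsLaminar, forall_mem_insert, subset_refl, true_or, true_and]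
  exact ⟨fun B hB => .inr (.inl (hS B hB)),
    fun A hA => ⟨.inl (hS A hA), fun B hB => hF A hA B hB⟩⟩

theorem subset_or_disjoint_of_minimal (hF : IsLaminar F) {A B : Finset α}
    (hA : Minimal (· ∈ F) A) (hB : B ∈ F) (hBA : B ≠ A) : A ⊆ B ∨ Disjoint A B := by
  rcases hF A hA.prop B hB with h | h | h
  · exact .inl h
  · exact absurd (subset_antisymm h (hA.le_of_le hB h)) hBA
  · exact .inr h

theorem mem_iff_mem_of_minimal (hF : IsLaminar F) {A B : Finset α} {x y : α}
    (hA : Minimal (· ∈ F) A) (hx : x ∈ A) (hy : y ∈ A) (hB : B ∈ F) (hBA : B ≠ A) :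
    x ∈ B ↔ y ∈ B := by
  rcases hF.subset_or_disjoint_of_minimal hA hB hBA with h | h
  · exact iff_of_true (h hx) (h hy)
  · exact iff_of_false (disjoint_left.1 h hx) (disjoint_left.1 h hy)

theorem two_le_card_erase_of_minimal [DecidableEq α] (hF : IsLaminar F)
    (htwo : ∀ A ∈ F, 2 ≤ #A) {A B : Finset α} {y : α} (hA : Minimal (· ∈ F) A) (hy : y ∈ A)
    (hB : B ∈ F) (hBA : B ≠ A) : 2 ≤ #(B.erase y) := by
  by_cases hyB : y ∈ B
  · have hAB : A ⊆ B := (hF.subset_or_disjoint_of_minimal hA hB hBA).resolve_right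
      (not_disjoint_iff.2 ⟨y, hy, hyB⟩)
    have := card_lt_card (ssubset_of_subset_of_ne hAB hBA.symm)
    have := htwo A hA.prop
    rw [card_erase_of_mem hyB]
    omega
  · rw [erase_eq_of_notMem hyB]
    exact htwo B hB

theorem card_le_card_sub_one [DecidableEq α] (hF : IsLaminar F) {S : Finset α}
    (hsub : ∀ A ∈ F, A ⊆ S) (htwo : ∀ A ∈ F, 2 ≤ #A) : #F ≤ #S - 1 := by
  induction S using Finset.strongInduction generalizing F with
  | H S ih =>
  obtain rfl | hne := F.eq_empty_or_nonempty
  · simp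
  obtain ⟨A, hA⟩ := exists_minimal hne
  obtain ⟨x, hx, y, hy, hxy⟩ := one_lt_card.1 (htwo A hA.prop)
  have hsame : ∀ B ∈ F.erase A, x ∈ B ↔ y ∈ B := fun B hB =>
    hF.mem_iff_mem_of_minimal hA hx hy (mem_of_mem_erase hB) (ne_of_mem_erase hB)
  have hinj : Set.InjOn (·.erase y) (F.erase A : Set (Finset α)) := fun B hB C hC h =>
    eq_of_erase_eq hxy (hsame B hB) (hsame C hC) h
  have hyS : y ∈ S := hsub A hA.prop hy
  have hrest := ih (S.erase y) (erase_ssubset hyS) ((hF.mono (erase_subset A F)).image_erase y)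
    (forall_mem_image.2 fun B hB => erase_subset_erase y (hsub B (mem_of_mem_erase hB)))
    (forall_mem_image.2 fun B hB =>
      hF.two_le_card_erase_of_minimal htwo hA hy (mem_of_mem_erase hB) (ne_of_mem_erase hB))
  rw [card_image_of_injOn hinj, card_erase_of_mem hA.prop, card_erase_of_mem hyS] at hrest
  have := hne.card_pos
  have := card_le_card (hsub A hA.prop)
  have := htwo A hA.prop
  omega

theorem card_le_card_sub_two [DecidableEq α] (hF : IsLaminar F) {S : Finset α}
    (hsub : ∀ A ∈ F, A ⊆ S) (htwo : ∀ A ∈ F, 2 ≤ #A) (hne : ∀ A ∈ F, A ≠ S) :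
    #F ≤ #S - 2 := by
  obtain rfl | ⟨A, hA⟩ := F.eq_empty_or_nonempty
  · simp
  have hS : 2 ≤ #S := (htwo A hA).trans (card_le_card (hsub A hA))
  have := (hF.insert_of_forall_subset hsub).card_le_card_sub_one
    (by simpa only [forall_mem_insert] using ⟨subset_refl S, hsub⟩)
    (by simpa only [forall_mem_insert] using ⟨hS, htwo⟩)
  rw [card_insert_of_notMem fun h => hne S h rfl] at this
  omega

end IsLaminar

theorem isLaminar_image_sdiff [DecidableEq α] {S : Finset α} {σ : Finset (Finset α)}
    (h : ∀ I ∈ σ, ∀ J ∈ σ, I ⊆ J ∨ J ⊆ I ∨ I ∪ J = S) : IsLaminar (σ.image (S \ ·)) := by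
  simp only [IsLaminar, forall_mem_image]
  intro I hI J hJ
  rcases h I hI J hJ with h | h | h
  · exact .inr (.inl (sdiff_subset_sdiff subset_rfl h))
  · exact .inl (sdiff_subset_sdiff subset_rfl h)
  · refine .inr (.inr (disjoint_left.2 fun z hzI hzJ => ?_))
    rw [mem_sdiff] at hzI hzJ
    rcases mem_union.1 (h ▸ hzI.1 : z ∈ I ∪ J) with h' | h'
    exacts [hzI.2 h', hzJ.2 h']

/-- Every pairwise-compatible subset `σ` of
`𝓘 = {I ⊆ {1,…,n} : 1 ∈ I, 2 ≤ |I| ≤ n − 2}` (where `I, J` are compatible if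
`I ⊆ J`, `J ⊆ I`, or `I ∪ J = {1,…,n}`) has cardinality at most `n − 3`. -/
theorem compatible_card_le (n : ℕ) (hn : 4 ≤ n)
    (σ : Finset (Finset ℕ))
    (hσ : ∀ I ∈ σ, I ⊆ Finset.Icc 1 n ∧ 1 ∈ I ∧ 2 ≤ I.card ∧ I.card ≤ n - 2)
    (hcompat : ∀ I ∈ σ, ∀ J ∈ σ, I ⊆ J ∨ J ⊆ I ∨ I ∪ J = Finset.Icc 1 n) :
    σ.card ≤ n - 3 := by
  set S := Icc 1 n
  have hS : #(S.erase 1) = n - 1 := by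
    rw [card_erase_of_mem (by simp [S]; omega), Nat.card_Icc, Nat.add_sub_cancel]
  have hcard_compl : ∀ I ∈ σ, #(S \ I) = n - #I := fun I hI => by
    rw [card_sdiff_of_subset (hσ I hI).1, Nat.card_Icc, Nat.add_sub_cancel]
  have hinj : Set.InjOn (S \ ·) (σ : Set (Finset ℕ)) := fun I hI J hJ h => by
    simpa only [Finset.sdiff_sdiff_eq_self (hσ I hI).1, Finset.sdiff_sdiff_eq_self (hσ J hJ).1]
      using congrArg (S \ ·) h
  have key := (isLaminar_image_sdiff hcompat).card_le_card_sub_two (S := S.erase 1)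
    (forall_mem_image.2 fun I hI => by
      rw [erase_eq]
      exact sdiff_subset_sdiff subset_rfl (singleton_subset_iff.2 (hσ I hI).2.1))
    (forall_mem_image.2 fun I hI => by
      rw [hcard_compl I hI]
      have := (hσ I hI).2.2.2
      omega)
    (forall_mem_image.2 fun I hI heq => by
      have := (hσ I hI).2.2.1
      have := congrArg card heq
      rw [hcard_compl I hI, hS] at this
      omega)
  rw [card_image_of_injOn hinj, hS] at key
  omega
end

section
/- Let n ≥ 4 be an integer and let 𝓘 = {I ⊆ {1,…,n} : 1 ∈ I and 2 ≤ |I| ≤ n − 2}. Call two elements I, J ∈ 𝓘 compatible if I ⊆ J, or J ⊆ I, or I ∪ J = {1,…,n}. If σ ⊆ 𝓘 is pairwise compatible and |σ| < n − 3, then there exists K ∈ 𝓘 with K ∉ σ such that σ ∪ {K} is pairwise compatible. Consequently, every maximal (with respect to inclusion) pairwise-compatible subset of 𝓘 has exactly n − 3 elements. -/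
/-!
Taking complements in `N = {1,…,n}` turns the sets `I ∋ 1` into subsets of `S = {2,…,n}`, and
turns compatibility into the condition that two sets are nested or disjoint. The family `σ` thus
becomes a hierarchy of clusters of size at least `2` on `S`, not containing `S` itself.
A hierarchy on `S` has at most `|S| - 1` clusters: a maximal cluster `M ≠ S` splits the others
into those inside `M` and those inside `S \ M`, and induction on both parts gives
`(|M| - 1) + (|S \ M| - 1) + 1`. The same split shows that a hierarchy with fewer clusters has
room for one more in `M` or in `S \ M`.
-/

open Finset

variable {α : Type*}

structure IsHierarchy (S : Finset α) (F : Finset (Finset α)) : Prop where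
  subset : ∀ X ∈ F, X ⊆ S
  two_le_card : ∀ X ∈ F, 2 ≤ #X
  nested : ∀ X ∈ F, ∀ Y ∈ F, X ⊆ Y ∨ Y ⊆ X ∨ Disjoint X Y

section

variable {S T M K : Finset α} {F G : Finset (Finset α)}

theorem IsHierarchy.mono (h : IsHierarchy S F) (hGF : G ⊆ F) : IsHierarchy S G where
  subset X hX := h.subset X (hGF hX)
  two_le_card X hX := h.two_le_card X (hGF hX)
  nested X hX Y hY := h.nested X (hGF hX) Y (hGF hY)

variable [DecidableEq α]

theorem IsHierarchy.restrict (h : IsHierarchy S F) (T : Finset α) :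
    IsHierarchy T (F.filter (· ⊆ T)) where
  subset _ hX := (mem_filter.1 hX).2
  two_le_card X hX := h.two_le_card X (mem_filter.1 hX).1
  nested := (h.mono (filter_subset _ F)).nested

theorem IsHierarchy.insert_of_nested (h : IsHierarchy S F) (hKS : K ⊆ S) (hK : 2 ≤ #K)
    (hKF : ∀ X ∈ F, K ⊆ X ∨ X ⊆ K ∨ Disjoint K X) : IsHierarchy S (insert K F) where
  subset := (forall_mem_insert _ _ _).2 ⟨hKS, h.subset⟩
  two_le_card := (forall_mem_insert _ _ _).2 ⟨hK, h.two_le_card⟩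
  nested X hX Y hY := by
    rcases mem_insert.1 hX with rfl | hXF <;> rcases mem_insert.1 hY with rfl | hYF
    · exact Or.inl subset_rfl
    · exact hKF Y hYF
    · have := hKF X hXF
      rw [disjoint_comm] at this
      tauto
    · exact h.nested X hXF Y hYF

theorem IsHierarchy.insert_self (h : IsHierarchy S F) (hS : 2 ≤ #S) :
    IsHierarchy S (insert S F) :=
  h.insert_of_nested subset_rfl hS fun X hX => Or.inr (Or.inl (h.subset X hX))

theorem IsHierarchy.ssubset_of_mem_erase (h : IsHierarchy S F) (hM : M ∈ F.erase S) : M ⊂ S :=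
  (h.subset M (mem_of_mem_erase hM)).ssubset_of_ne (ne_of_mem_erase hM)

theorem IsHierarchy.subset_sdiff_iff_not_subset (h : IsHierarchy S F) (hM : Maximal (· ∈ F) M)
    {X : Finset α} (hX : X ∈ F) : X ⊆ S \ M ↔ ¬X ⊆ M := by
  rw [subset_sdiff]
  constructor
  · rintro ⟨-, hdisj⟩ hXM
    have hX0 : X = ∅ := disjoint_self.1 (hdisj.mono_right hXM)
    simpa [hX0] using h.two_le_card X hX
  · intro hXM
    refine ⟨h.subset X hX, ?_⟩
    rcases h.nested X hX M hM.1 with hXM' | hMX | hdisj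
    · exact absurd hXM' hXM
    · exact absurd (hM.2 hX hMX) hXM
    · exact hdisj

theorem IsHierarchy.card_eq_add_of_maximal (h : IsHierarchy S F) (hM : Maximal (· ∈ F) M) :
    #F = #(F.filter (· ⊆ M)) + #(F.filter (· ⊆ S \ M)) := by
  rw [filter_congr fun X hX => h.subset_sdiff_iff_not_subset hM hX,
    card_filter_add_card_filter_not]

theorem IsHierarchy.nested_sdiff_of_maximal (h : IsHierarchy S F)
    (hM : Maximal (· ∈ F.erase S) M) {X : Finset α} (hX : X ∈ F) :
    S \ M ⊆ X ∨ X ⊆ S \ M ∨ Disjoint (S \ M) X := by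
  by_cases hXS : X = S
  · exact Or.inl (hXS ▸ sdiff_subset)
  have hX' : X ∈ F.erase S := mem_erase.2 ⟨hXS, hX⟩
  have h' := h.mono (erase_subset S F)
  by_cases hXM : X ⊆ M
  · exact Or.inr (Or.inr (disjoint_sdiff_self_left.mono_right hXM))
  · exact Or.inr (Or.inl ((h'.subset_sdiff_iff_not_subset hM hX').2 hXM))

theorem IsHierarchy.card_le (h : IsHierarchy S F) : #F ≤ #S - 1 := by
  induction S using Finset.strongInduction generalizing F with
  | H S ih =>
  have hF : #F - 1 ≤ #(F.erase S) := pred_card_le_card_erase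
  obtain hF' | ⟨M, hM⟩ := (F.erase S).eq_empty_or_nonempty.imp_right exists_maximal
  · rcases F.eq_empty_or_nonempty with rfl | ⟨X, hX⟩
    · simp
    have := card_le_card (h.subset X hX)
    have := h.two_le_card X hX
    rw [hF', card_empty] at hF
    omega
  have h' := h.mono (erase_subset S F)
  have hMS := h.ssubset_of_mem_erase hM.1
  have hM2 := h.two_le_card M (mem_of_mem_erase hM.1)
  have hCS : S \ M ⊂ S := sdiff_ssubset hMS.subset (card_pos.1 (by omega))
  have := ih M hMS (h'.restrict M)
  have := ih (S \ M) hCS (h'.restrict (S \ M))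
  have := h'.card_eq_add_of_maximal hM
  have := card_sdiff_add_card_eq_card hMS.subset
  have := card_lt_card hMS
  omega

theorem IsHierarchy.card_le_of_notMem (h : IsHierarchy S F) (hSF : S ∉ F) : #F ≤ #S - 2 := by
  rcases F.eq_empty_or_nonempty with rfl | ⟨X, hX⟩
  · simp
  have := card_le_card (h.subset X hX)
  have := h.two_le_card X hX
  have := (h.insert_self (by omega)).card_le
  rw [card_insert_of_notMem hSF] at this
  omega

theorem IsHierarchy.insert_of_insert_restrict (h : IsHierarchy S F) (hTS : T ⊂ S)
    (hT : ∀ X ∈ F, T ⊆ X ∨ X ⊆ T ∨ Disjoint T X)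
    (hKG : K ∉ (F.erase S).filter (· ⊆ T))
    (hK : IsHierarchy T (insert K ((F.erase S).filter (· ⊆ T)))) :
    K ∉ F ∧ IsHierarchy S (insert K F) := by
  have hKT : K ⊆ T := hK.subset K (mem_insert_self _ _)
  have hmem : ∀ X ∈ F, X ⊆ T → X ∈ (F.erase S).filter (· ⊆ T) := fun X hX hXT =>
    mem_filter.2 ⟨mem_erase.2 ⟨(hXT.trans_ssubset hTS).ne, hX⟩, hXT⟩
  refine ⟨fun hKF => hKG (hmem K hKF hKT),
    h.insert_of_nested (hKT.trans hTS.subset) (hK.two_le_card K (mem_insert_self _ _))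
      fun X hX => ?_⟩
  rcases hT X hX with hTX | hXT | hdisj
  · exact Or.inl (hKT.trans hTX)
  · exact hK.nested K (mem_insert_self _ _) X (mem_insert_of_mem (hmem X hX hXT))
  · exact Or.inr (Or.inr (hdisj.mono_left hKT))

theorem IsHierarchy.exists_insert (h : IsHierarchy S F) (hcard : #F + 1 < #S) :
    ∃ K ∉ F, IsHierarchy S (insert K F) := by
  induction S using Finset.strongInduction generalizing F with
  | H S ih =>
  by_cases hSF : S ∉ F
  · exact ⟨S, hSF, h.insert_self (by omega)⟩
  rw [not_not] at hSF
  have hFcard := card_erase_add_one hSF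
  obtain hF' | ⟨M, hM⟩ := (F.erase S).eq_empty_or_nonempty.imp_right exists_maximal
  · rw [erase_eq_empty_iff] at hF'
    obtain rfl : F = {S} := hF'.resolve_left (ne_empty_of_mem hSF)
    rw [card_singleton] at hcard
    obtain ⟨K, hKS, hK⟩ := exists_subset_card_eq (show 2 ≤ #S by omega)
    refine ⟨K, fun hKF => ?_, h.insert_of_nested hKS hK.ge fun X hX => ?_⟩
    · rw [mem_singleton.1 hKF] at hK
      omega
    · exact Or.inl (mem_singleton.1 hX ▸ hKS)
  have h' := h.mono (erase_subset S F)
  have hMS := h.ssubset_of_mem_erase hM.1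
  have hM2 := h.two_le_card M (mem_of_mem_erase hM.1)
  have hMlt := card_lt_card hMS
  have hCS : S \ M ⊂ S := sdiff_ssubset hMS.subset (card_pos.1 (by omega))
  have := h'.card_eq_add_of_maximal hM
  have := card_sdiff_add_card_eq_card hMS.subset
  rcases (by omega : #((F.erase S).filter (· ⊆ M)) + 1 < #M ∨
      #((F.erase S).filter (· ⊆ S \ M)) + 1 < #(S \ M)) with hsmall | hsmall
  · obtain ⟨K, hKG, hK⟩ := ih M hMS (h'.restrict M) hsmall
    exact ⟨K, h.insert_of_insert_restrict hMS
      (fun X hX => h.nested M (mem_of_mem_erase hM.1) X hX) hKG hK⟩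
  · obtain ⟨K, hKG, hK⟩ := ih (S \ M) hCS (h'.restrict (S \ M)) hsmall
    exact ⟨K, h.insert_of_insert_restrict hCS
      (fun X hX => h.nested_sdiff_of_maximal hM hX) hKG hK⟩

end

section Compatible

variable [DecidableEq α] {N I J : Finset α} {a : α} {σ : Finset (Finset α)}

theorem compatible_iff_nested_sdiff (hI : I ⊆ N) (hJ : J ⊆ N) :
    (I ⊆ J ∨ J ⊆ I ∨ I ∪ J = N) ↔
      (N \ I ⊆ N \ J ∨ N \ J ⊆ N \ I ∨ Disjoint (N \ I) (N \ J)) := by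
  have hunion : I ∪ J = N ↔ Disjoint (N \ I) (N \ J) := by
    rw [disjoint_iff_inter_eq_empty, ← sdiff_union_distrib, sdiff_eq_empty_iff_subset]
    exact ⟨fun h => h.superset, (union_subset hI hJ).antisymm⟩
  rw [sdiff_subset_sdiff_iff_subset hI hJ, sdiff_subset_sdiff_iff_subset hJ hI, hunion]
  exact or_left_comm

theorem sdiff_subset_erase_of_mem (haI : a ∈ I) : N \ I ⊆ N.erase a :=
  sdiff_singleton_eq_erase a N ▸ sdiff_subset_sdiff subset_rfl (singleton_subset_iff.2 haI)

theorem card_bounds_iff_sdiff (hI : I ⊆ N) (haI : a ∈ I) :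
    (2 ≤ #I ∧ #I ≤ #N - 2) ↔ (2 ≤ #(N \ I) ∧ N \ I ≠ N.erase a) := by
  have hne : N \ I ≠ N.erase a ↔ #(N \ I) < #(N.erase a) :=
    ⟨fun h => card_lt_card ((sdiff_subset_erase_of_mem haI).ssubset_of_ne h),
      fun h e => (e ▸ h).false⟩
  rw [hne, card_erase_of_mem (hI haI)]
  have := card_sdiff_add_card_eq_card hI
  have := card_pos.2 ⟨a, haI⟩
  omega

/-- The pairwise-compatible subsets of `𝓘`, for the ground set `N` with marked point `a`. -/
def IsCompatibleFamily (N : Finset α) (a : α) (σ : Finset (Finset α)) : Prop :=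
  (∀ I ∈ σ, I ⊆ N ∧ a ∈ I ∧ 2 ≤ #I ∧ #I ≤ #N - 2) ∧
    ∀ I ∈ σ, ∀ J ∈ σ, I ⊆ J ∨ J ⊆ I ∨ I ∪ J = N

theorem isCompatibleFamily_iff (hσ : ∀ I ∈ σ, I ⊆ N ∧ a ∈ I) :
    IsCompatibleFamily N a σ ↔
      IsHierarchy (N.erase a) (σ.image (N \ ·)) ∧ N.erase a ∉ σ.image (N \ ·) := by
  constructor
  · rintro ⟨hbounds, hcompat⟩
    have hcard I (hI : I ∈ σ) :=
      (card_bounds_iff_sdiff (hbounds I hI).1 (hbounds I hI).2.1).1 (hbounds I hI).2.2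
    refine ⟨⟨forall_mem_image.2 fun I hI => sdiff_subset_erase_of_mem (hσ I hI).2,
      forall_mem_image.2 fun I hI => (hcard I hI).1,
      forall_mem_image.2 fun I hI => forall_mem_image.2 fun J hJ =>
        (compatible_iff_nested_sdiff (hσ I hI).1 (hσ J hJ).1).1 (hcompat I hI J hJ)⟩, ?_⟩
    intro hSF
    obtain ⟨I, hI, hIS⟩ := mem_image.1 hSF
    exact (hcard I hI).2 hIS
  · rintro ⟨hF, hSF⟩
    have hcard I (hI : I ∈ σ) : 2 ≤ #(N \ I) ∧ N \ I ≠ N.erase a :=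
      ⟨hF.two_le_card _ (mem_image_of_mem _ hI), fun h => hSF (h ▸ mem_image_of_mem _ hI)⟩
    exact ⟨fun I hI => ⟨(hσ I hI).1, (hσ I hI).2,
        (card_bounds_iff_sdiff (hσ I hI).1 (hσ I hI).2).2 (hcard I hI)⟩,
      fun I hI J hJ => (compatible_iff_nested_sdiff (hσ I hI).1 (hσ J hJ).1).2
        (hF.nested _ (mem_image_of_mem _ hI) _ (mem_image_of_mem _ hJ))⟩

theorem card_image_sdiff (hσ : ∀ I ∈ σ, I ⊆ N) : #(σ.image (N \ ·)) = #σ :=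
  card_image_of_injOn fun I hI J hJ h => by
    rw [← Finset.sdiff_sdiff_eq_self (hσ I hI), ← Finset.sdiff_sdiff_eq_self (hσ J hJ)]
    exact congrArg (N \ ·) h

theorem IsCompatibleFamily.card_le (hσ : IsCompatibleFamily N a σ) : #σ ≤ #N - 3 := by
  rcases σ.eq_empty_or_nonempty with rfl | ⟨I, hI⟩
  · simp
  have hsub I (hI : I ∈ σ) : I ⊆ N ∧ a ∈ I := ⟨(hσ.1 I hI).1, (hσ.1 I hI).2.1⟩
  have hF := (isCompatibleFamily_iff hsub).1 hσ
  have := hF.1.card_le_of_notMem hF.2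
  rw [card_image_sdiff fun I hI => (hsub I hI).1,
    card_erase_of_mem ((hsub I hI).1 (hsub I hI).2)] at this
  omega

theorem IsCompatibleFamily.exists_insert (hσ : IsCompatibleFamily N a σ) (ha : a ∈ N)
    (hcard : #σ + 3 < #N) : ∃ K ∉ σ, IsCompatibleFamily N a (insert K σ) := by
  have hsub I (hI : I ∈ σ) : I ⊆ N ∧ a ∈ I := ⟨(hσ.1 I hI).1, (hσ.1 I hI).2.1⟩
  obtain ⟨hF, hSF⟩ := (isCompatibleFamily_iff hsub).1 hσ
  have hS := card_erase_of_mem ha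
  obtain ⟨K, hKF, hK⟩ := (hF.insert_self (by omega)).exists_insert (by
    rw [card_insert_of_notMem hSF, card_image_sdiff fun I hI => (hsub I hI).1]
    omega)
  have hKS : K ⊆ N.erase a := hK.subset K (mem_insert_self _ _)
  have hKN : K ⊆ N := hKS.trans (erase_subset a N)
  refine ⟨N \ K, fun hL => hKF (mem_insert_of_mem
    (mem_image.2 ⟨_, hL, Finset.sdiff_sdiff_eq_self hKN⟩)), ?_⟩
  have hsub' : ∀ I ∈ insert (N \ K) σ, I ⊆ N ∧ a ∈ I := (forall_mem_insert _ _ _).2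
    ⟨⟨sdiff_subset, mem_sdiff.2 ⟨ha, fun haK => notMem_erase a N (hKS haK)⟩⟩, hsub⟩
  rw [isCompatibleFamily_iff hsub', image_insert, Finset.sdiff_sdiff_eq_self hKN]
  refine ⟨hK.mono (insert_subset_insert K (subset_insert _ _)), ?_⟩
  rw [mem_insert, not_or]
  exact ⟨fun h => hKF (h ▸ mem_insert_self _ _), hSF⟩

end Compatible

theorem compatible_extend_and_maximal_card_general (n : ℕ) :
    (∀ σ : Finset (Finset ℕ),
      (∀ I ∈ σ, I ⊆ Finset.Icc 1 n ∧ 1 ∈ I ∧ 2 ≤ I.card ∧ I.card ≤ n - 2) →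
      (∀ I ∈ σ, ∀ J ∈ σ, I ⊆ J ∨ J ⊆ I ∨ I ∪ J = Finset.Icc 1 n) →
      σ.card < n - 3 →
      ∃ K : Finset ℕ,
        K ⊆ Finset.Icc 1 n ∧ 1 ∈ K ∧ 2 ≤ K.card ∧ K.card ≤ n - 2 ∧ K ∉ σ ∧
        (∀ I ∈ insert K σ, ∀ J ∈ insert K σ,
          I ⊆ J ∨ J ⊆ I ∨ I ∪ J = Finset.Icc 1 n))
    ∧
    (∀ σ : Finset (Finset ℕ),
      (∀ I ∈ σ, I ⊆ Finset.Icc 1 n ∧ 1 ∈ I ∧ 2 ≤ I.card ∧ I.card ≤ n - 2) →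
      (∀ I ∈ σ, ∀ J ∈ σ, I ⊆ J ∨ J ⊆ I ∨ I ∪ J = Finset.Icc 1 n) →
      (∀ τ : Finset (Finset ℕ), σ ⊆ τ →
        (∀ I ∈ τ, I ⊆ Finset.Icc 1 n ∧ 1 ∈ I ∧ 2 ≤ I.card ∧ I.card ≤ n - 2) →
        (∀ I ∈ τ, ∀ J ∈ τ, I ⊆ J ∨ J ⊆ I ∨ I ∪ J = Finset.Icc 1 n) →
        τ = σ) →
      σ.card = n - 3) := by
  have hfam σ : IsCompatibleFamily (Icc 1 n) 1 σ ↔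
      (∀ I ∈ σ, I ⊆ Icc 1 n ∧ 1 ∈ I ∧ 2 ≤ #I ∧ #I ≤ n - 2) ∧
        ∀ I ∈ σ, ∀ J ∈ σ, I ⊆ J ∨ J ⊆ I ∨ I ∪ J = Icc 1 n := by
    simp only [IsCompatibleFamily, Nat.card_Icc, Nat.add_sub_cancel]
  have hσ σ h1 h2 := (hfam σ).2 ⟨h1, h2⟩
  refine ⟨fun σ h1 h2 hcard => ?_,
    fun σ h1 h2 hmax => le_antisymm ?_ (not_lt.1 fun hlt => ?_)⟩
  · obtain ⟨K, hKσ, hK⟩ :=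
      (hσ σ h1 h2).exists_insert (mem_Icc.2 ⟨le_rfl, by omega⟩) (by rw [Nat.card_Icc]; omega)
    obtain ⟨hbounds, hcompat⟩ := (hfam _).1 hK
    obtain ⟨hKN, h1K, hK2, hKn⟩ := hbounds K (mem_insert_self K σ)
    exact ⟨K, hKN, h1K, hK2, hKn, hKσ, hcompat⟩
  · simpa using (hσ σ h1 h2).card_le
  · obtain ⟨K, hKσ, hK⟩ :=
      (hσ σ h1 h2).exists_insert (mem_Icc.2 ⟨le_rfl, by omega⟩) (by rw [Nat.card_Icc]; omega)
    have hτ := hmax (insert K σ) (subset_insert K σ) ((hfam _).1 hK).1 ((hfam _).1 hK).2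
    exact hKσ (hτ ▸ mem_insert_self K σ)

/-- If `σ` is a pairwise-compatible subset of
`𝓘 = {I ⊆ {1,…,n} : 1 ∈ I, 2 ≤ |I| ≤ n − 2}` (where `I, J` are compatible if `I ⊆ J`,
`J ⊆ I`, or `I ∪ J = {1,…,n}`) with `|σ| < n − 3`, then `σ` can be extended by a new
element `K ∈ 𝓘` to a pairwise-compatible set.  Consequently, every maximal
pairwise-compatible subset of `𝓘` has exactly `n − 3` elements. -/
theorem compatible_extend_and_maximal_card (n : ℕ) (hn : 4 ≤ n) :
    (∀ σ : Finset (Finset ℕ),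
      (∀ I ∈ σ, I ⊆ Finset.Icc 1 n ∧ 1 ∈ I ∧ 2 ≤ I.card ∧ I.card ≤ n - 2) →
      (∀ I ∈ σ, ∀ J ∈ σ, I ⊆ J ∨ J ⊆ I ∨ I ∪ J = Finset.Icc 1 n) →
      σ.card < n - 3 →
      ∃ K : Finset ℕ,
        K ⊆ Finset.Icc 1 n ∧ 1 ∈ K ∧ 2 ≤ K.card ∧ K.card ≤ n - 2 ∧ K ∉ σ ∧
        (∀ I ∈ insert K σ, ∀ J ∈ insert K σ,
          I ⊆ J ∨ J ⊆ I ∨ I ∪ J = Finset.Icc 1 n))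
    ∧
    (∀ σ : Finset (Finset ℕ),
      (∀ I ∈ σ, I ⊆ Finset.Icc 1 n ∧ 1 ∈ I ∧ 2 ≤ I.card ∧ I.card ≤ n - 2) →
      (∀ I ∈ σ, ∀ J ∈ σ, I ⊆ J ∨ J ⊆ I ∨ I ∪ J = Finset.Icc 1 n) →
      (∀ τ : Finset (Finset ℕ), σ ⊆ τ →
        (∀ I ∈ τ, I ⊆ Finset.Icc 1 n ∧ 1 ∈ I ∧ 2 ≤ I.card ∧ I.card ≤ n - 2) →
        (∀ I ∈ τ, ∀ J ∈ τ, I ⊆ J ∨ J ⊆ I ∨ I ∪ J = Finset.Icc 1 n) →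
        τ = σ) →
      σ.card = n - 3) :=
  compatible_extend_and_maximal_card_general n
end
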